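/- Let 0 < β < 1/2, ρ_m, ρ_n > 0, α_m > 0, and set z3 = (1-β)α_m/β, z4 = 1 + 1/(α_m β ρ_n), A = ρ_m/(α_m β ρ_n), B = 1 + (1/α_m − ρ_m)/(βρ_n), Φ(x) = (x/α_m − 1)/(βρ_n), Ω(x) = (x/α_m − 1)(1+ρ_m x)/(βρ_n), and G(a,b) = e^{1/(βρ_n) + B²/(4A)}·(√π/(2√A))·(erf(√A·(a + B/(2A))) − erf(√A·(b + B/(2A)))). Then ∫_{α_m}^{z3} ∫_{Φ(x)}^{Ω(x)} e^{-(x+y)} dy dx = (1/z4)·e^{1/(βρ_n)}·(e^{-z4 α_m} − e^{-z4 z3}) − G(z3, α_m). -/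

import Mathlib

open MeasureTheory Real

/-- The Gauss error function. -/
noncomputable def erf (x : ℝ) : ℝ :=
  (2 / Real.sqrt Real.pi) * ∫ t in (0:ℝ)..x, Real.exp (-t ^ 2)

/-! The inner integral equals `exp (-(x + Φ x)) - exp (-(x + Ω x))`. Here `x + Φ x = z4 x - 1/(βρn)`
is linear and `x + Ω x = A x² + B x - 1/(βρn)` is quadratic in `x`, so the outer integral splits into
an elementary exponential integral and a Gaussian integral, which completing the square turns into
a difference of values of `erf`. -/

theorem integral_exp_neg_sq (u v : ℝ) :
    ∫ t in u..v, exp (-t ^ 2) = √π / 2 * (erf v - erf u) := by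
  have hint : ∀ a b : ℝ, IntervalIntegrable (fun t ↦ exp (-t ^ 2)) volume a b :=
    fun a b ↦ (by fun_prop : Continuous fun t : ℝ ↦ exp (-t ^ 2)).intervalIntegrable a b
  have hπ : √π ≠ 0 := (sqrt_pos.mpr pi_pos).ne'
  rw [erf, erf, ← mul_sub, intervalIntegral.integral_interval_sub_left (hint _ _) (hint _ _)]
  field_simp

theorem integral_exp_neg_add (x a b : ℝ) :
    ∫ y in a..b, exp (-(x + y)) = exp (-(x + a)) - exp (-(x + b)) := by
  rw [intervalIntegral.integral_comp_add_left (fun y ↦ exp (-y)),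
    intervalIntegral.integral_comp_neg, integral_exp]

theorem integral_exp_neg_mul_sub {k : ℝ} (hk : k ≠ 0) (C a b : ℝ) :
    ∫ x in a..b, exp (-(k * x - C)) = 1 / k * exp C * (exp (-(k * a)) - exp (-(k * b))) := by
  have hsplit : ∀ x, exp (-(k * x - C)) = exp C * exp (-k * x) := fun x ↦ by
    rw [← exp_add]; ring_nf
  simp only [hsplit, intervalIntegral.integral_const_mul]
  rw [intervalIntegral.integral_comp_mul_left exp (neg_ne_zero.mpr hk), integral_exp, smul_eq_mul,
    neg_mul, neg_mul]
  field_simp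
  ring

theorem integral_exp_neg_quadratic_sub {A : ℝ} (hA : 0 < A) (B C a b : ℝ) :
    ∫ x in a..b, exp (-(A * x ^ 2 + B * x - C))
      = exp (C + B ^ 2 / (4 * A)) * (√π / (2 * √A))
        * (erf (√A * (b + B / (2 * A))) - erf (√A * (a + B / (2 * A)))) := by
  have hsA : √A ≠ 0 := (sqrt_pos.mpr hA).ne'
  have hsquare : ∀ x, A * x ^ 2 + B * x - C
      = (√A * x + √A * (B / (2 * A))) ^ 2 - (C + B ^ 2 / (4 * A)) := fun x ↦ by
    have : √A ^ 2 = A := sq_sqrt hA.le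
    field_simp
    rw [this]
    ring
  have hsplit : ∀ x, exp (-(A * x ^ 2 + B * x - C)) = exp (C + B ^ 2 / (4 * A))
      * exp (-(√A * x + √A * (B / (2 * A))) ^ 2) := fun x ↦ by
    rw [hsquare, ← exp_add]; ring_nf
  simp only [hsplit, intervalIntegral.integral_const_mul]
  rw [intervalIntegral.integral_comp_mul_add (fun t ↦ exp (-t ^ 2)) hsA, integral_exp_neg_sq,
    smul_eq_mul, ← mul_add, ← mul_add]
  field_simp

theorem hsic_pa_P_II221_general
    (β ρm ρn αm : ℝ) (hβ0 : 0 < β)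
    (hρm : 0 < ρm) (hρn : 0 < ρn) (hαm : 0 < αm)
    (z3 z4 A B : ℝ) (Φ Ω : ℝ → ℝ) (G : ℝ → ℝ → ℝ)
    (hz4 : z4 = 1 + 1 / (αm * β * ρn))
    (hA : A = ρm / (αm * β * ρn))
    (hB : B = 1 + (1 / αm - ρm) / (β * ρn))
    (hΦ : ∀ x, Φ x = (x / αm - 1) / (β * ρn))
    (hΩ : ∀ x, Ω x = (x / αm - 1) * (1 + ρm * x) / (β * ρn))
    (hG : ∀ a b, G a b = Real.exp (1 / (β * ρn) + B ^ 2 / (4 * A))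
        * (Real.sqrt Real.pi / (2 * Real.sqrt A))
        * (erf (Real.sqrt A * (a + B / (2 * A)))
            - erf (Real.sqrt A * (b + B / (2 * A))))) :
    (∫ x in αm..z3, ∫ y in (Φ x)..(Ω x), Real.exp (-(x + y)))
      = (1 / z4) * Real.exp (1 / (β * ρn))
          * (Real.exp (-(z4 * αm)) - Real.exp (-(z4 * z3)))
        - G z3 αm := by
  have hA0 : 0 < A := by rw [hA]; positivity
  have hz40 : z4 ≠ 0 := by rw [hz4]; positivity
  have hΦ_add : ∀ x, x + Φ x = z4 * x - 1 / (β * ρn) := fun x ↦ by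
    rw [hΦ, hz4]; field_simp; ring
  have hΩ_add : ∀ x, x + Ω x = A * x ^ 2 + B * x - 1 / (β * ρn) := fun x ↦ by
    rw [hΩ, hA, hB]; field_simp; ring
  have hinner : ∀ x, ∫ y in (Φ x)..(Ω x), exp (-(x + y))
      = exp (-(z4 * x - 1 / (β * ρn))) - exp (-(A * x ^ 2 + B * x - 1 / (β * ρn))) := fun x ↦ by
    rw [integral_exp_neg_add, hΦ_add, hΩ_add]
  simp only [hinner]
  rw [intervalIntegral.integral_sub
    ((by fun_prop : Continuous _).intervalIntegrable _ _)
    ((by fun_prop : Continuous _).intervalIntegrable _ _), integral_exp_neg_mul_sub hz40,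
    integral_exp_neg_quadratic_sub hA0, hG]

theorem hsic_pa_P_II221
    (β ρm ρn αm : ℝ) (hβ0 : 0 < β) (hβ1 : β < 1/2)
    (hρm : 0 < ρm) (hρn : 0 < ρn) (hαm : 0 < αm)
    (z3 z4 A B : ℝ) (Φ Ω : ℝ → ℝ) (G : ℝ → ℝ → ℝ)
    (hz3 : z3 = (1 - β) * αm / β)
    (hz4 : z4 = 1 + 1 / (αm * β * ρn))
    (hA : A = ρm / (αm * β * ρn))
    (hB : B = 1 + (1 / αm - ρm) / (β * ρn))
    (hΦ : ∀ x, Φ x = (x / αm - 1) / (β * ρn))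
    (hΩ : ∀ x, Ω x = (x / αm - 1) * (1 + ρm * x) / (β * ρn))
    (hG : ∀ a b, G a b = Real.exp (1 / (β * ρn) + B ^ 2 / (4 * A))
        * (Real.sqrt Real.pi / (2 * Real.sqrt A))
        * (erf (Real.sqrt A * (a + B / (2 * A)))
            - erf (Real.sqrt A * (b + B / (2 * A))))) :
    (∫ x in αm..z3, ∫ y in (Φ x)..(Ω x), Real.exp (-(x + y)))
      = (1 / z4) * Real.exp (1 / (β * ρn))
          * (Real.exp (-(z4 * αm)) - Real.exp (-(z4 * z3)))
        - G z3 αm :=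
  hsic_pa_P_II221_general β ρm ρn αm hβ0 hρm hρn hαm z3 z4 A B Φ Ω G hz4 hA hB hΦ hΩ hG
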